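/- Let α ∈ (0,1) be irrational and n ≥ 1 with k_0(n) = L where L ≥ 2 (or L ≥ 1 if α < 1/2). Let ∥·∥* be the one-sided distance with ∥nα∥* = ‖nα‖ < 1/2. Then ∥(n + q_{L+1})α∥* < ∥nα∥*. -/

import Mathlib

/-- Gauss-map iterates of `α`. -/
noncomputable def cfFrac (α : ℝ) : ℕ → ℝ
  | 0 => α
  | k + 1 => Int.fract (1 / cfFrac α k)

/-- Partial quotients of `α` (1-indexed, `cfA α 0 = 0` unused). -/
noncomputable def cfA (α : ℝ) : ℕ → ℕ
  | 0 => 0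
  | k + 1 => (⌊1 / cfFrac α k⌋).toNat

/-- Numerators of the convergents of `α`. -/
noncomputable def cfP (α : ℝ) : ℕ → ℕ
  | 0 => 0
  | 1 => 1
  | k + 2 => cfA α (k + 2) * cfP α (k + 1) + cfP α k

/-- Denominators of the convergents of `α`. -/
noncomputable def cfQ (α : ℝ) : ℕ → ℕ
  | 0 => 1
  | 1 => cfA α 1
  | k + 2 => cfA α (k + 2) * cfQ α (k + 1) + cfQ α k

/-- Distance from `x` to the nearest integer. -/
noncomputable def distNearInt (x : ℝ) : ℝ := min (Int.fract x) (1 - Int.fract x)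

/-- `b` is the sequence of digits of an Ostrowski representation of `n` w.r.t. `α`:
`n = Σ b_k q_k` with `0 ≤ b_0 ≤ a_1 - 1`, `0 ≤ b_k ≤ a_{k+1}` for `k ≥ 1`, and
`b_{k-1} = 0` whenever `b_k = a_{k+1}`. -/
def OstrowskiRep (α : ℝ) (n : ℕ) (b : ℕ → ℕ) : Prop :=
  b 0 ≤ cfA α 1 - 1 ∧
  (∀ k, 1 ≤ k → b k ≤ cfA α (k + 1)) ∧
  (∀ k, 1 ≤ k → b k = cfA α (k + 1) → b (k - 1) = 0) ∧
  ∃ N, (∀ k, N < k → b k = 0) ∧ n = ∑ k ∈ Finset.range (N + 1), b k * cfQ α k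

/-! With `θ_k = |q_{k-1} α - p_{k-1}|`, expanding `n α` along the Ostrowski digits gives
`n α = M + (-1)^L t` with `M ∈ ℤ` and `θ_{L+2} < t < θ_L < 1/2`; the lower bound comes from
`b_L ≥ 1` and `b_{L+1} < a_{L+2}`, the upper one from the digit bounds via
`θ_{k+2} = θ_k - a_{k+1} θ_{k+1}`.
Since `q_{L+1} α = p_{L+1} - (-1)^L θ_{L+2}`, adding `q_{L+1}` moves `n α` towards the integer `M`
by `θ_{L+2}` without crossing it, so the one-sided distance that equals `‖n α‖` decreases. -/

open Finset

variable {α : ℝ}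

theorem irrational_cfFrac (hirr : Irrational α) : ∀ k, Irrational (cfFrac α k)
  | 0 => hirr
  | k + 1 => by
    rw [cfFrac, Int.fract, one_div]
    exact (irrational_cfFrac hirr k).inv.sub_intCast _

theorem cfFrac_mem_Ioo (hα : α ∈ Set.Ioo (0 : ℝ) 1) (hirr : Irrational α) :
    ∀ k, cfFrac α k ∈ Set.Ioo (0 : ℝ) 1
  | 0 => hα
  | k + 1 =>
    ⟨(Int.fract_nonneg _).lt_of_ne (irrational_cfFrac hirr (k + 1)).ne_zero.symm,
      Int.fract_lt_one _⟩

theorem cfA_succ_cast {k : ℕ} (h : 0 ≤ cfFrac α k) :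
    (cfA α (k + 1) : ℝ) = ⌊1 / cfFrac α k⌋ := by
  have : 0 ≤ ⌊1 / cfFrac α k⌋ := Int.floor_nonneg.2 (by positivity)
  rw [cfA, ← Int.cast_natCast, Int.toNat_of_nonneg this]

theorem one_le_cfA_succ {k : ℕ} (h : cfFrac α k ∈ Set.Ioo (0 : ℝ) 1) :
    1 ≤ cfA α (k + 1) := by
  have : (1 : ℝ) ≤ cfA α (k + 1) := by
    rw [cfA_succ_cast h.1.le, ← Int.cast_one, Int.cast_le, Int.le_floor, Int.cast_one,
      le_div_iff₀ h.1, one_mul]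
    exact h.2.le
  exact_mod_cast this

theorem cfFrac_mul_cfFrac_succ {k : ℕ} (h : 0 < cfFrac α k) :
    cfFrac α k * cfFrac α (k + 1) = 1 - cfA α (k + 1) * cfFrac α k := by
  rw [cfA_succ_cast h.le]
  simp only [cfFrac, Int.fract]
  field_simp

/-- `cfTheta α k = |q_{k-1} α - p_{k-1}|` (see `cfQ_mul_sub_cfP`). -/
noncomputable def cfTheta (α : ℝ) (k : ℕ) : ℝ := ∏ j ∈ range k, cfFrac α j

theorem cfTheta_zero : cfTheta α 0 = 1 := prod_range_zero _

theorem cfTheta_succ (k : ℕ) : cfTheta α (k + 1) = cfTheta α k * cfFrac α k :=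
  prod_range_succ _ _

theorem cfTheta_one : cfTheta α 1 = α := by
  rw [cfTheta_succ, cfTheta_zero, one_mul, cfFrac]

theorem cfTheta_pos (hα : α ∈ Set.Ioo (0 : ℝ) 1) (hirr : Irrational α) (k : ℕ) :
    0 < cfTheta α k :=
  prod_pos fun j _ => (cfFrac_mem_Ioo hα hirr j).1

theorem cfTheta_succ_lt (hα : α ∈ Set.Ioo (0 : ℝ) 1) (hirr : Irrational α) (k : ℕ) :
    cfTheta α (k + 1) < cfTheta α k := by
  rw [cfTheta_succ]
  exact mul_lt_of_lt_one_right (cfTheta_pos hα hirr k) (cfFrac_mem_Ioo hα hirr k).2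

theorem cfTheta_antitone (hα : α ∈ Set.Ioo (0 : ℝ) 1) (hirr : Irrational α) :
    Antitone (cfTheta α) :=
  antitone_nat_of_succ_le fun k => (cfTheta_succ_lt hα hirr k).le

theorem cfTheta_add_two (hα : α ∈ Set.Ioo (0 : ℝ) 1) (hirr : Irrational α) (k : ℕ) :
    cfTheta α (k + 2) = cfTheta α k - cfA α (k + 1) * cfTheta α (k + 1) := by
  rw [cfTheta_succ, cfTheta_succ, mul_assoc,
    cfFrac_mul_cfFrac_succ (cfFrac_mem_Ioo hα hirr k).1]
  ring

theorem cfQ_mul_sub_cfP (hα : α ∈ Set.Ioo (0 : ℝ) 1) (hirr : Irrational α) :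
    ∀ k, (cfQ α k : ℝ) * α - cfP α k = (-1) ^ k * cfTheta α (k + 1)
  | 0 => by simp [cfQ, cfP, cfTheta_one]
  | 1 => by
    have h := cfTheta_add_two hα hirr 0
    simp only [cfQ, cfP, zero_add, cfTheta_zero, cfTheta_one] at h ⊢
    linear_combination h
  | k + 2 => by
    simp only [cfQ, cfP]
    push_cast
    linear_combination (cfA α (k + 2) : ℝ) * cfQ_mul_sub_cfP hα hirr (k + 1)
      + cfQ_mul_sub_cfP hα hirr k
      - (-1 : ℝ) ^ k * cfTheta_add_two hα hirr (k + 1)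

theorem cfTheta_two_lt_half (hα : α ∈ Set.Ioo (0 : ℝ) 1) (hirr : Irrational α) :
    cfTheta α 2 < 1 / 2 := by
  have h2 := cfTheta_add_two hα hirr 0
  have hlt := cfTheta_succ_lt hα hirr 1
  have ha : (1 : ℝ) ≤ cfA α 1 := by exact_mod_cast one_le_cfA_succ (cfFrac_mem_Ioo hα hirr 0)
  simp only [zero_add, Nat.reduceAdd, cfTheta_zero, cfTheta_one] at h2 hlt
  nlinarith [hα.1]

theorem cfTheta_lt_half (hα : α ∈ Set.Ioo (0 : ℝ) 1) (hirr : Irrational α) {L : ℕ}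
    (hL : 2 ≤ L ∨ (α < 1 / 2 ∧ 1 ≤ L)) : cfTheta α L < 1 / 2 := by
  rcases hL with hL | ⟨hα2, hL⟩
  · exact (cfTheta_antitone hα hirr hL).trans_lt (cfTheta_two_lt_half hα hirr)
  · exact (cfTheta_antitone hα hirr hL).trans_lt (by rwa [cfTheta_one])

/-- `(-1) ^ m * ∑_{m ≤ k ≤ N} b k * (q_k α - p_k)`, by `cfQ_mul_sub_cfP`. -/
noncomputable def ostrowskiTail (α : ℝ) (b : ℕ → ℕ) (m N : ℕ) : ℝ :=
  ∑ k ∈ Ico m (N + 1), (-1) ^ (m + k) * b k * cfTheta α (k + 1)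

theorem ostrowskiTail_eq_sub {b : ℕ → ℕ} {m N : ℕ} (h : m ≤ N) :
    ostrowskiTail α b m N = b m * cfTheta α (m + 1) - ostrowskiTail α b (m + 1) N := by
  rw [ostrowskiTail, sum_eq_sum_Ico_succ_bot (Nat.lt_succ_of_le h), Even.neg_one_pow ⟨m, rfl⟩,
    one_mul, sub_eq_add_neg, ostrowskiTail, ← sum_neg_distrib]
  congr 1
  exact sum_congr rfl fun k _ => by ring

theorem sum_mul_cfQ_mul_eq_sum_mul_cfP_add (hα : α ∈ Set.Ioo (0 : ℝ) 1) (hirr : Irrational α)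
    (b : ℕ → ℕ) (m N : ℕ) :
    ((∑ k ∈ Ico m (N + 1), b k * cfQ α k : ℕ) : ℝ) * α
      = (∑ k ∈ Ico m (N + 1), b k * cfP α k : ℕ) + (-1) ^ m * ostrowskiTail α b m N := by
  rw [← sub_eq_iff_eq_add', ostrowskiTail, mul_sum]
  push_cast
  rw [sum_mul, ← sum_sub_distrib]
  refine sum_congr rfl fun k _ => ?_
  have hsign : (-1 : ℝ) ^ m * (-1) ^ (m + k) = (-1) ^ k := by
    rw [← pow_add, ← add_assoc, pow_add, Even.neg_one_pow ⟨m, rfl⟩, one_mul]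
  linear_combination (b k : ℝ) * cfQ_mul_sub_cfP hα hirr k - (b k * cfTheta α (k + 1)) * hsign

theorem ostrowskiTail_mem_Icc (hα : α ∈ Set.Ioo (0 : ℝ) 1) (hirr : Irrational α)
    {b : ℕ → ℕ} {m N : ℕ} (hmN : m ≤ N + 1) (hb : ∀ k, m ≤ k → b k ≤ cfA α (k + 1)) :
    ostrowskiTail α b m N ∈ Set.Icc (cfTheta α (N + 2) - cfTheta α (m + 1))
      (cfTheta α m - cfTheta α (N + 2)) := by
  induction hmN using Nat.decreasingInduction with
  | self =>
    rw [ostrowskiTail, Ico_self, sum_empty]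
    exact ⟨(sub_self _).le, sub_nonneg.2 (cfTheta_succ_lt hα hirr _).le⟩
  | of_succ m hm ih =>
    obtain ⟨hlo, hhi⟩ := ih fun k hk => hb k (by omega)
    have hbm : (b m : ℝ) ≤ cfA α (m + 1) := by exact_mod_cast hb m le_rfl
    have hθ := cfTheta_add_two hα hirr m
    have hθpos := cfTheta_pos hα hirr (m + 1)
    rw [ostrowskiTail_eq_sub (by omega)]
    constructor <;> nlinarith [(b m).cast_nonneg (α := ℝ)]

theorem cfTheta_lt_ostrowskiTail (hα : α ∈ Set.Ioo (0 : ℝ) 1) (hirr : Irrational α)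
    {b : ℕ → ℕ} {L N : ℕ} (hLN : L + 1 ≤ N) (hbL : b L ≠ 0) (hbL1 : b (L + 1) < cfA α (L + 2))
    (hb : ∀ k, L + 2 ≤ k → b k ≤ cfA α (k + 1)) :
    cfTheta α (L + 2) < ostrowskiTail α b L N := by
  have htail := (ostrowskiTail_mem_Icc (m := L + 2) (N := N) hα hirr (by omega) hb).1
  have hbL' : (1 : ℝ) ≤ b L := by exact_mod_cast Nat.one_le_iff_ne_zero.2 hbL
  have hbL1' : (b (L + 1) : ℝ) + 1 ≤ cfA α (L + 2) := by exact_mod_cast hbL1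
  have hθ := cfTheta_add_two hα hirr (L + 1)
  rw [ostrowskiTail_eq_sub (by omega), ostrowskiTail_eq_sub hLN]
  -- the tail is at least `θ_{L+1} - (a_{L+2} - 1) θ_{L+2} + θ_{N+2} - θ_{L+3} = θ_{L+2} + θ_{N+2}`
  nlinarith [cfTheta_pos hα hirr (L + 1), cfTheta_pos hα hirr (L + 2), cfTheta_pos hα hirr (N + 2)]

theorem fract_intCast_add_of_mem_Ioo (m : ℤ) {t : ℝ} (ht : t ∈ Set.Ioo (0 : ℝ) 1) :
    Int.fract (m + t) = t := by
  rw [Int.fract_intCast_add, Int.fract_eq_self.2 ⟨ht.1.le, ht.2⟩]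

theorem fract_intCast_sub_of_mem_Ioo (m : ℤ) {t : ℝ} (ht : t ∈ Set.Ioo (0 : ℝ) 1) :
    Int.fract (m - t) = 1 - t := by
  have hfr : Int.fract t = t := Int.fract_eq_self.2 ⟨ht.1.le, ht.2⟩
  rw [sub_eq_add_neg, Int.fract_intCast_add, Int.fract_neg (by rw [hfr]; exact ht.1.ne'), hfr]

theorem apply_intCast_add_sign_mul_cases {f : ℝ → ℝ}
    (hf : f = (fun ξ => Int.fract ξ) ∨ f = (fun ξ => Int.fract (-ξ))) {s : ℝ}
    (hs : s = 1 ∨ s = -1) :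
    (∀ (m : ℤ) (t : ℝ), t ∈ Set.Ioo (0 : ℝ) 1 → f (m + s * t) = t) ∨
      (∀ (m : ℤ) (t : ℝ), t ∈ Set.Ioo (0 : ℝ) 1 → f (m + s * t) = 1 - t) := by
  rcases hf with rfl | rfl <;> rcases hs with rfl | rfl
  · exact .inl fun m t ht => by simpa using fract_intCast_add_of_mem_Ioo m ht
  · exact .inr fun m t ht => by simpa [← sub_eq_add_neg] using fract_intCast_sub_of_mem_Ioo m ht
  · refine .inr fun m t ht => ?_
    beta_reduce
    rw [show -(m + 1 * t) = ((-m : ℤ) : ℝ) - t by push_cast; ring]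
    exact fract_intCast_sub_of_mem_Ioo _ ht
  · refine .inl fun m t ht => ?_
    beta_reduce
    rw [show -(m + -1 * t) = ((-m : ℤ) : ℝ) + t by push_cast; ring]
    exact fract_intCast_add_of_mem_Ioo _ ht

theorem distNearInt_intCast_add_sign_mul {s : ℝ} (hs : s = 1 ∨ s = -1) (m : ℤ) {t : ℝ}
    (ht : 0 < t) (ht2 : t ≤ 1 / 2) : distNearInt (m + s * t) = t := by
  rcases apply_intCast_add_sign_mul_cases (.inl rfl) hs with h | h <;>
    simp only [distNearInt, h m t ⟨ht, by linarith⟩] <;> grind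

theorem apply_intCast_add_sign_mul_lt_of_eq_distNearInt {f : ℝ → ℝ}
    (hf : f = (fun ξ => Int.fract ξ) ∨ f = (fun ξ => Int.fract (-ξ))) {s : ℝ} (hs : s = 1 ∨ s = -1)
    {m m' : ℤ} {t t' : ℝ} (ht' : 0 < t') (htt' : t' < t) (ht : t < 1 / 2)
    (hfx : f (m + s * t) = distNearInt (m + s * t)) :
    f (m' + s * t') < f (m + s * t) := by
  rw [distNearInt_intCast_add_sign_mul hs m (ht'.trans htt') ht.le] at hfx
  rcases apply_intCast_add_sign_mul_cases hf hs with h | h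
  · rwa [h m' t' ⟨ht', by linarith⟩, h m t ⟨by linarith, by linarith⟩]
  · rw [h m t ⟨by linarith, by linarith⟩] at hfx
    linarith

theorem OstrowskiRep.lt_cfA_of_ne_zero {n : ℕ} {b : ℕ → ℕ} (hb : OstrowskiRep α n b) {k : ℕ}
    (hk : b k ≠ 0) : b (k + 1) < cfA α (k + 2) :=
  (hb.2.1 (k + 1) k.succ_pos).lt_of_ne fun h => hk (hb.2.2.1 (k + 1) k.succ_pos h)

theorem sum_range_eq_sum_Ico_of_eq_zero {M : Type*} [AddCommMonoid M] {g : ℕ → M} {L N₀ N : ℕ}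
    (hN : N₀ ≤ N) (hlow : ∀ k < L, g k = 0) (hhigh : ∀ k, N₀ < k → g k = 0) :
    ∑ k ∈ range (N₀ + 1), g k = ∑ k ∈ Ico L (N + 1), g k := by
  have h₀ : ∑ k ∈ range (N₀ + 1), g k = ∑ k ∈ range (N + 1), g k :=
    sum_subset (range_subset_range.2 (by omega))
      fun k hk hk' => hhigh k (by simp only [mem_range] at hk hk'; omega)
  have h₁ : ∑ k ∈ Ico L (N + 1), g k = ∑ k ∈ range (N + 1), g k :=
    sum_subset (fun k hk => by simp only [mem_range, mem_Ico] at hk ⊢; omega)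
      fun k hk hk' => hlow k (by simp only [mem_range, mem_Ico] at hk hk'; omega)
  rw [h₀, h₁]

theorem stmt15_general (α : ℝ) (hα : α ∈ Set.Ioo (0:ℝ) 1) (hirr : Irrational α)
    (n : ℕ) (b : ℕ → ℕ) (hb : OstrowskiRep α n b)
    (L : ℕ) (hL : b L ≠ 0) (hL0 : ∀ k, k < L → b k = 0)
    (hLlow : 2 ≤ L ∨ (α < 1 / 2 ∧ 1 ≤ L))
    (f : ℝ → ℝ) (hf : f = (fun ξ => Int.fract ξ) ∨ f = (fun ξ => Int.fract (-ξ)))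
    (hfn : f ((n : ℝ) * α) = distNearInt ((n : ℝ) * α)) :
    f (((n + cfQ α (L + 1) : ℕ) : ℝ) * α) < f ((n : ℝ) * α) := by
  have hbL1 := hb.lt_cfA_of_ne_zero hL
  obtain ⟨-, hdig, -, N₀, hN₀, hn⟩ := hb
  have hL1 : 1 ≤ L := by omega
  set N := max N₀ (L + 1)
  rw [sum_range_eq_sum_Ico_of_eq_zero (le_max_left N₀ (L + 1))
    (fun k hk => by rw [hL0 k hk, zero_mul]) (fun k hk => by rw [hN₀ k hk, zero_mul])] at hn
  set t := ostrowskiTail α b L N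
  set M := ∑ k ∈ Ico L (N + 1), b k * cfP α k
  have hnα : (n : ℝ) * α = ((M : ℤ) : ℝ) + (-1) ^ L * t := by
    rw [hn, sum_mul_cfQ_mul_eq_sum_mul_cfP_add hα hirr, Int.cast_natCast]
  have hqα : ((n + cfQ α (L + 1) : ℕ) : ℝ) * α
      = ((M + cfP α (L + 1) : ℕ) : ℤ) + (-1) ^ L * (t - cfTheta α (L + 2)) := by
    push_cast
    linear_combination hnα + cfQ_mul_sub_cfP hα hirr (L + 1)
  have ht_lo : cfTheta α (L + 2) < t := cfTheta_lt_ostrowskiTail hα hirr (le_max_right _ _) hL hbL1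
    fun k hk => hdig k (by omega)
  have ht_hi : t < 1 / 2 :=
    (ostrowskiTail_mem_Icc hα hirr (by omega) fun k hk => hdig k (by omega)).2.trans_lt
      (by linarith [cfTheta_pos hα hirr (N + 2), cfTheta_lt_half hα hirr hLlow])
  rw [hnα] at hfn ⊢
  rw [hqα]
  exact apply_intCast_add_sign_mul_lt_of_eq_distNearInt hf (neg_one_pow_eq_or ℝ L) (sub_pos.2 ht_lo)
    (by linarith [cfTheta_pos hα hirr (L + 2)]) ht_hi hfn

theorem stmt15 (α : ℝ) (hα : α ∈ Set.Ioo (0:ℝ) 1) (hirr : Irrational α)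
    (n : ℕ) (hn : 1 ≤ n) (b : ℕ → ℕ) (hb : OstrowskiRep α n b)
    (L : ℕ) (hL : b L ≠ 0) (hL0 : ∀ k, k < L → b k = 0)
    (hLlow : 2 ≤ L ∨ (α < 1 / 2 ∧ 1 ≤ L))
    (f : ℝ → ℝ) (hf : f = (fun ξ => Int.fract ξ) ∨ f = (fun ξ => Int.fract (-ξ)))
    (hfn : f ((n : ℝ) * α) = distNearInt ((n : ℝ) * α)) :
    f (((n + cfQ α (L + 1) : ℕ) : ℝ) * α) < f ((n : ℝ) * α) :=
  stmt15_general α hα hirr n b hb L hL hL0 hLlow f hf hfn
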